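/- Let h > 0 be real and θ ∈ ℝ. Over ℂ, let A be the 2×2 matrix (1/h²)·[[2, −1], [−1, 2]], let Φ = diag(1, e^{iθ}), let W = (1/2)·I₂, and let V be the 2×1 column vector of ones. Then A is invertible with A⁻¹ = (h²/3)·[[2, 1], [1, 2]], and the 1×1 matrix Vᵀ W Φ* A⁻¹ Φ V (where Φ* is the conjugate transpose of Φ) has its unique entry equal to (h²/6)(4 + 2cos θ) = (h²/6)(4 + e^{iθ} + e^{−iθ}). -/

import Mathlib

open Matrix Complex

noncomputable def A16 (h : ℝ) : Matrix (Fin 2) (Fin 2) ℂ :=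
  (1 / (h ^ 2 : ℂ)) • !![2, -1; -1, 2]

noncomputable def Phi16 (θ : ℝ) : Matrix (Fin 2) (Fin 2) ℂ :=
  diagonal ![1, exp (I * θ)]

noncomputable def W16 : Matrix (Fin 2) (Fin 2) ℂ := (1 / 2 : ℂ) • 1

def V16 : Matrix (Fin 2) (Fin 1) ℂ := fun _ _ => 1

/-! The inverse comes from `[[2, -1], [-1, 2]] * [[2, 1], [1, 2]] = 3 • 1`. Conjugating a 2×2 matrix
by `Φ = diag(1, e^{iθ})` multiplies its off-diagonal entries by `e^{±iθ}`, and `Vᵀ W (·) V` averages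
the four entries, so the symbol of `A⁻¹ = (h²/3)[[2, 1], [1, 2]]` is `(h²/6)(4 + e^{iθ} + e^{-iθ})`. -/

theorem stencil_mul_adjugate {R : Type*} [CommRing R] :
    !![(2 : R), -1; -1, 2] * !![2, 1; 1, 2] = (3 : R) • (1 : Matrix (Fin 2) (Fin 2) R) := by
  rw [mul_fin_two, one_fin_two, smul_of]
  ext i j
  fin_cases i <;> fin_cases j <;> simp <;> norm_num

theorem A16_mul_eq_one {h : ℝ} (hh : h ≠ 0) :
    A16 h * (((h ^ 2 : ℂ) / 3) • !![2, 1; 1, 2]) = 1 := by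
  have hh' : (h : ℂ) ≠ 0 := by exact_mod_cast hh
  rw [A16, smul_mul_smul_comm, stencil_mul_adjugate, smul_smul]
  convert one_smul ℂ (1 : Matrix (Fin 2) (Fin 2) ℂ) using 2
  field_simp

theorem star_exp_I_mul_ofReal (θ : ℝ) : star (exp (I * θ)) = exp (-(I * θ)) := by
  change starRingEnd ℂ _ = _
  rw [← exp_conj]
  simp

theorem V16_W16_Phi16_sandwich_apply (B : Matrix (Fin 2) (Fin 2) ℂ) (θ : ℝ) :
    (V16ᵀ * W16 * (Phi16 θ)ᴴ * B * Phi16 θ * V16) 0 0 =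
      (B 0 0 + B 0 1 * exp (I * θ) + exp (-(I * θ)) * B 1 0 + B 1 1) / 2 := by
  have hunit : exp (-(I * θ)) * exp (I * θ) = 1 := by rw [← exp_add]; simp
  simp only [W16, one_div, Matrix.mul_smul, Matrix.mul_one, Phi16, diagonal_conjTranspose, smul_mul,
    Fin.isValue, mul_apply, Matrix.smul_apply, transpose_apply, V16, one_mul, Fin.sum_univ_two,
    diagonal_apply_eq, Pi.star_apply, cons_val_zero, star_one, ne_eq, one_ne_zero, not_false_eq_true,
    diagonal_apply_ne, add_zero, zero_ne_one, cons_val_one, cons_val_fin_one, star_exp_I_mul_ofReal,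
    zero_add, smul_eq_mul, mul_one, mul_zero]
  linear_combination B 1 1 / 2 * hunit

theorem stmt_16 (h θ : ℝ) (hh : 0 < h) :
    IsUnit (A16 h) ∧
    (A16 h)⁻¹ = ((h ^ 2 : ℂ) / 3) • !![2, 1; 1, 2] ∧
    (V16ᵀ * W16 * (Phi16 θ)ᴴ * (A16 h)⁻¹ * Phi16 θ * V16) 0 0 =
      ((h ^ 2 : ℂ) / 6) * (4 + 2 * (Real.cos θ : ℂ)) ∧
    (V16ᵀ * W16 * (Phi16 θ)ᴴ * (A16 h)⁻¹ * Phi16 θ * V16) 0 0 =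
      ((h ^ 2 : ℂ) / 6) * (4 + exp (I * θ) + exp (-(I * θ))) := by
  have hmul := A16_mul_eq_one hh.ne'
  have hinv : (A16 h)⁻¹ = ((h ^ 2 : ℂ) / 3) • !![2, 1; 1, 2] := inv_eq_right_inv hmul
  have hsymbol : (V16ᵀ * W16 * (Phi16 θ)ᴴ * (A16 h)⁻¹ * Phi16 θ * V16) 0 0 =
      ((h ^ 2 : ℂ) / 6) * (4 + exp (I * θ) + exp (-(I * θ))) := by
    rw [V16_W16_Phi16_sandwich_apply, hinv]
    simp only [Fin.isValue, Matrix.smul_apply, of_apply, cons_val', cons_val_zero, cons_val_fin_one,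
      smul_eq_mul, cons_val_one, mul_one]
    ring
  have hcos : 2 * (Real.cos θ : ℂ) = exp (I * θ) + exp (-(I * θ)) := by
    rw [ofReal_cos, two_cos, mul_comm I, neg_mul]
  refine ⟨(isUnit_iff_isUnit_det _).2 (isUnit_det_of_right_inverse hmul), hinv, ?_, hsymbol⟩
  rw [hsymbol, hcos, add_assoc]
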